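/- arXiv:1506.03251 — 3 statements merged into one kernel-verified Lean document; each statement's English description precedes it below -/
import Mathlib

section
/- For every n ≥ 4, the helm graph H_n satisfies β(H_n) + β(complement of H_n) = 3n − 2 and β(H_n) · β(complement of H_n) = 2n(n − 1), where β denotes the vertex cover number. -/
/-- The independence number of a finite simple graph: the maximum cardinality of a
set of pairwise nonadjacent vertices. -/
noncomputable def indepNum {V : Type*} [Fintype V] (G : SimpleGraph V) : ℕ :=
  sSup {k : ℕ | ∃ s : Finset V, s.card = k ∧ ∀ u ∈ s, ∀ v ∈ s, ¬ G.Adj u v}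

/-- The vertex cover number of a finite simple graph: the minimum cardinality of a
set of vertices containing at least one endpoint of every edge. -/
noncomputable def coverNum {V : Type*} [Fintype V] (G : SimpleGraph V) : ℕ :=
  sInf {k : ℕ | ∃ s : Finset V, s.card = k ∧ ∀ u v, G.Adj u v → u ∈ s ∨ v ∈ s}

/-- The helm graph `H_n`: a wheel (cycle vertices `Sum.inl (some i)`, hub `Sum.inl none`)
together with a pendant vertex `Sum.inr i` attached to each cycle vertex. -/
def helmGraph (n : ℕ) : SimpleGraph (Option (Fin n) ⊕ Fin n) :=
  SimpleGraph.fromRel (fun a b =>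
    (∃ i : Fin n, a = Sum.inl none ∧ b = Sum.inl (some i)) ∨
    (∃ i j : Fin n, a = Sum.inl (some i) ∧ b = Sum.inl (some j) ∧ (i.val + 1) % n = j.val) ∨
    (∃ i : Fin n, a = Sum.inl (some i) ∧ b = Sum.inr i))

/-!
The cycle vertices cover `H_n`, and the `n` pendant edges are pairwise disjoint, so `β(H_n) = n`.
The vertex covers of the complement are the complements of cliques, so
`β(H_nᶜ) = (2n + 1) - ω(H_n)`. For `n ≥ 4` the cycle `C_n` is triangle-free and each pendant vertex
has a single neighbour, so `ω(H_n) = 3`, attained by the hub and two consecutive cycle vertices.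
-/

open Finset SimpleGraph

section VertexCover

variable {V : Type*} [Fintype V] {G : SimpleGraph V}

theorem coverNum_le_card {s : Finset V} (hs : G.IsVertexCover s) : coverNum G ≤ #s :=
  Nat.sInf_le ⟨s, rfl, fun _ _ h => hs h⟩

theorem exists_isVertexCover_card_eq_coverNum :
    ∃ s : Finset V, G.IsVertexCover s ∧ #s = coverNum G := by
  classical
  obtain ⟨s, hcard, hs⟩ := Nat.sInf_mem (s := {k | ∃ s : Finset V, #s = k ∧ G.IsVertexCover s})
    ⟨_, univ, rfl, by simp⟩
  exact ⟨s, hs, hcard⟩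

theorem coverNum_eq_card_sub_indepNum : coverNum G = Fintype.card V - G.indepNum := by
  classical
  apply le_antisymm
  · obtain ⟨t, ht⟩ := G.exists_isNIndepSet_indepNum
    have hcover : G.IsVertexCover ↑tᶜ := by simpa using ht.isIndepSet
    simpa [card_compl, ht.card_eq] using coverNum_le_card hcover
  · obtain ⟨s, hs, hcard⟩ := exists_isVertexCover_card_eq_coverNum (G := G)
    have hindep : G.IsIndepSet ↑sᶜ := by simpa using hs
    have := hindep.card_le_indepNum
    rw [card_compl] at this
    omega

theorem coverNum_compl : coverNum Gᶜ = Fintype.card V - G.cliqueNum := by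
  rw [coverNum_eq_card_sub_indepNum, indepNum_compl]

/-- Injectivity of `Sum.elim f g` says that the edges `f i — g i` are pairwise disjoint. -/
theorem card_le_coverNum_of_disjoint_edges {ι : Type*} [Fintype ι] (f g : ι → V)
    (hinj : Function.Injective (Sum.elim f g)) (hadj : ∀ i, G.Adj (f i) (g i)) :
    Fintype.card ι ≤ coverNum G := by
  classical
  obtain ⟨s, hs, hcard⟩ := exists_isVertexCover_card_eq_coverNum (G := G)
  rw [← hcard, ← card_univ]
  let pick i := if f i ∈ s then f i else g i
  refine card_le_card_of_injOn pick (fun i _ => ?_) (fun i _ j _ hij => ?_)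
  · by_cases hi : f i ∈ s
    · simp [pick, hi]
    · simpa [pick, hi] using (hs (hadj i)).resolve_left hi
  · have hf := hinj.comp Sum.inl_injective
    have hg := hinj.comp Sum.inr_injective
    have hfg : ∀ a b, f a ≠ g b := fun a b h => Sum.inl_ne_inr (hinj h)
    simp only [pick] at hij
    split_ifs at hij
    exacts [hf hij, (hfg _ _ hij).elim, (hfg _ _ hij.symm).elim, hg hij]

end VertexCover

theorem Nat.add_one_mod_eq_iff {n a b : ℕ} (ha : a < n) :
    (a + 1) % n = b ↔ a + 1 < n ∧ b = a + 1 ∨ a + 1 = n ∧ b = 0 := by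
  rcases Nat.lt_or_ge (a + 1) n with h | h
  · rw [Nat.mod_eq_of_lt h]; omega
  · rw [show a + 1 = n by omega, Nat.mod_self]; omega

section Helm

variable {n : ℕ}

theorem helmGraph_adj_hub (i : Fin n) : (helmGraph n).Adj (.inl none) (.inl (some i)) := by
  simp [helmGraph]

theorem helmGraph_adj_pendant (i : Fin n) : (helmGraph n).Adj (.inl (some i)) (.inr i) := by
  simp [helmGraph]

theorem helmGraph_adj_cycle_iff {i j : Fin n} :
    (helmGraph n).Adj (.inl (some i)) (.inl (some j)) ↔
      i ≠ j ∧ ((i.val + 1) % n = j.val ∨ (j.val + 1) % n = i.val) := by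
  simp [helmGraph]

theorem helmGraph_adj_inr_iff {x : Option (Fin n) ⊕ Fin n} {i : Fin n} :
    (helmGraph n).Adj x (.inr i) ↔ x = .inl (some i) := by
  simp only [helmGraph, fromRel_adj]
  aesop

theorem isVertexCover_helmGraph_cycle :
    (helmGraph n).IsVertexCover (Set.range fun i => .inl (some i)) := by
  intro u v h
  simp only [helmGraph, fromRel_adj] at h
  aesop

theorem coverNum_helmGraph : coverNum (helmGraph n) = n := by
  apply le_antisymm
  · let cycle : Fin n ↪ Option (Fin n) ⊕ Fin n := Function.Embedding.some.trans .inl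
    have hcover : (helmGraph n).IsVertexCover ↑(univ.map cycle) := by
      simpa [cycle] using isVertexCover_helmGraph_cycle
    simpa using coverNum_le_card hcover
  · simpa using card_le_coverNum_of_disjoint_edges (fun i : Fin n => .inl (some i)) Sum.inr
      (by simp [Function.Injective]) helmGraph_adj_pendant

theorem helmGraph_cycle_not_triangle (hn : 4 ≤ n) (i j k : Fin n) :
    ¬ ((helmGraph n).Adj (.inl (some i)) (.inl (some j)) ∧
      (helmGraph n).Adj (.inl (some i)) (.inl (some k)) ∧
      (helmGraph n).Adj (.inl (some j)) (.inl (some k))) := by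
  simp only [helmGraph_adj_cycle_iff, ne_eq, Fin.ext_iff, Nat.add_one_mod_eq_iff i.isLt,
    Nat.add_one_mod_eq_iff j.isLt, Nat.add_one_mod_eq_iff k.isLt]
  omega

theorem helmGraph_isClique_card_le_three (hn : 4 ≤ n) {s : Finset (Option (Fin n) ⊕ Fin n)}
    (hs : (helmGraph n).IsClique (s : Set _)) : #s ≤ 3 := by
  by_cases hpendant : ∃ i, .inr i ∈ s
  · obtain ⟨i, hi⟩ := hpendant
    have hsub : s ⊆ {.inl (some i), .inr i} := fun x hx => by
      by_cases hxi : x = .inr i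
      · simp [hxi]
      · simp [helmGraph_adj_inr_iff.mp (hs hx hi hxi)]
    exact (card_le_card hsub).trans (card_le_two.trans (by norm_num))
  · simp only [not_exists] at hpendant
    have hcycle : ∀ x ∈ s.erase (.inl none), ∃ i, x = .inl (some i) := by
      rintro ((_ | i) | i) hx
      · simp at hx
      · exact ⟨i, rfl⟩
      · exact absurd (mem_of_mem_erase hx) (hpendant i)
    have hcycle_card : #(s.erase (.inl none)) ≤ 2 := by
      by_contra! h
      obtain ⟨x, hx, y, hy, z, hz, hxy, hxz, hyz⟩ := two_lt_card.mp h
      obtain ⟨i, rfl⟩ := hcycle x hx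
      obtain ⟨j, rfl⟩ := hcycle y hy
      obtain ⟨k, rfl⟩ := hcycle z hz
      have hxs := mem_of_mem_erase hx
      have hys := mem_of_mem_erase hy
      have hzs := mem_of_mem_erase hz
      exact helmGraph_cycle_not_triangle hn i j k
        ⟨hs hxs hys hxy, hs hxs hzs hxz, hs hys hzs hyz⟩
    have := pred_card_le_card_erase (s := s) (a := .inl none)
    omega

theorem three_le_cliqueNum_helmGraph (hn : 2 ≤ n) : 3 ≤ (helmGraph n).cliqueNum := by
  let i₀ : Fin n := ⟨0, by omega⟩
  let i₁ : Fin n := ⟨1, by omega⟩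
  have htriangle : (helmGraph n).IsNClique 3 {.inl none, .inl (some i₀), .inl (some i₁)} := by
    rw [is3Clique_triple_iff, helmGraph_adj_cycle_iff]
    refine ⟨helmGraph_adj_hub _, helmGraph_adj_hub _, by simp [i₀, i₁, Fin.ext_iff], ?_⟩
    simp [i₀, i₁, Nat.mod_eq_of_lt (show 1 < n by omega)]
  exact htriangle.card_eq ▸ htriangle.isClique.card_le_cliqueNum

theorem helmGraph_cliqueNum (hn : 4 ≤ n) : (helmGraph n).cliqueNum = 3 := by
  obtain ⟨s, hs⟩ := (helmGraph n).exists_isNClique_cliqueNum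
  exact le_antisymm (hs.card_eq ▸ helmGraph_isClique_card_le_three hn hs.isClique)
    (three_le_cliqueNum_helmGraph (by omega))

end Helm

/-- For `n ≥ 4`, the helm graph satisfies `β(H_n) + β(H_nᶜ) = 3n - 2` and
`β(H_n) * β(H_nᶜ) = 2n(n-1)`. -/
theorem coverNum_helmGraph_add_mul_complement (n : ℕ) (hn : 4 ≤ n) :
    coverNum (helmGraph n) + coverNum (helmGraph n)ᶜ = 3 * n - 2 ∧
    coverNum (helmGraph n) * coverNum (helmGraph n)ᶜ = 2 * n * (n - 1) := by
  have hcard : Fintype.card (Option (Fin n) ⊕ Fin n) = 2 * n + 1 := by simp; ring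
  rw [coverNum_compl, coverNum_helmGraph, helmGraph_cliqueNum hn, hcard,
    show 2 * n + 1 - 3 = 2 * (n - 1) by omega]
  constructor
  · omega
  · ring
end

section
/- For every n ≥ 3, the complete sun graph S_n satisfies β(S_n) + β(complement of S_n) = 2n and β(S_n) · β(complement of S_n) = n², where β denotes the vertex cover number. -/
/-- The complete sun graph `S_n`: the independent set `U` consists of the vertices
`Sum.inl i`, the set `W` of vertices `Sum.inr j` induces a complete graph, and
`u_i` is adjacent to `w_j` iff `j = i` or `j = i + 1 (mod n)`. -/
def sunGraph (n : ℕ) : SimpleGraph (Fin n ⊕ Fin n) :=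
  SimpleGraph.fromRel (fun a b =>
    (∃ i j : Fin n, a = Sum.inr i ∧ b = Sum.inr j) ∨
    (∃ i j : Fin n, a = Sum.inl i ∧ b = Sum.inr j ∧ (j = i ∨ (i.val + 1) % n = j.val)))

/-!
A vertex cover is the complement of an independent set, so it suffices to bound the independent
sets. In `S_n` the index map `u_i, w_i ↦ i` is injective on independent sets, because `W` is a
clique and `u_i ~ w_i`; hence the cover `W` of size `n` is minimum. Independent sets of the
complement are cliques of `S_n`, and `u_i ↦ i + 2`, `w_j ↦ j` is injective on those: a clique
contains at most one `u_i`, whose only neighbours in `W` are `w_i` and `w_{i+1}`, both different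
from `w_{i+2}` when `n ≥ 3`. Hence the cover `U` of the complement is minimum too.
-/

open Finset SimpleGraph

theorem coverNum_eq_of_isVertexCover {V : Type*} [Fintype V] {G : SimpleGraph V} {s : Finset V}
    (hs : G.IsVertexCover s)
    (hmax : ∀ t : Finset V, G.IsIndepSet t → #t + #s ≤ Fintype.card V) :
    coverNum G = #s := by
  classical
  refine le_antisymm (Nat.sInf_le ⟨s, rfl, fun _ _ h ↦ hs h⟩)
    (le_csInf ⟨#s, s, rfl, fun _ _ h ↦ hs h⟩ ?_)
  rintro _ ⟨c, rfl, hc⟩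
  have hcompl : G.IsIndepSet ↑cᶜ := by
    rw [coe_compl, isIndepSet_compl_iff_isVertexCover]
    exact fun _ _ h ↦ hc _ _ h
  have := hmax _ hcompl
  have := card_add_card_compl c
  omega

lemma Nat.add_two_mod_ne {n i : ℕ} (hn : 3 ≤ n) (hi : i < n) :
    (i + 2) % n ≠ i ∧ (i + 1) % n ≠ (i + 2) % n := by
  obtain h | h | h : i + 2 < n ∨ i + 2 = n ∨ i + 1 = n := by omega
  · rw [Nat.mod_eq_of_lt h, Nat.mod_eq_of_lt (by omega)]; omega
  · rw [h, Nat.mod_self, Nat.mod_eq_of_lt (by omega)]; omega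
  · rw [show i + 2 = 1 + n by omega, h, Nat.mod_self, Nat.add_mod_right, Nat.mod_eq_of_lt (by omega)]
    omega

section sunGraph

variable {n : ℕ}

@[simp]
lemma sunGraph_adj_inl_inl (i j : Fin n) : ¬ (sunGraph n).Adj (.inl i) (.inl j) := by
  simp [sunGraph]

@[simp]
lemma sunGraph_adj_inr_inr {i j : Fin n} : (sunGraph n).Adj (.inr i) (.inr j) ↔ i ≠ j := by
  simp [sunGraph]

@[simp]
lemma sunGraph_adj_inl_inr {i j : Fin n} :
    (sunGraph n).Adj (.inl i) (.inr j) ↔ j = i ∨ (i.val + 1) % n = j.val := by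
  simp [sunGraph]

lemma card_le_of_isIndepSet_sunGraph {t : Finset (Fin n ⊕ Fin n)}
    (ht : (sunGraph n).IsIndepSet t) : #t ≤ n := by
  have hinj : Set.InjOn (Sum.elim id id : Fin n ⊕ Fin n → Fin n) t := by
    intro a ha b hb hab
    by_contra hne
    refine ht ha hb hne ?_
    rcases a with i | i <;> rcases b with j | j <;> simp_all [adj_comm]
  simpa using card_le_card_of_injOn _ (fun _ _ ↦ mem_coe.2 (mem_univ _)) hinj

lemma card_le_of_isClique_sunGraph (hn : 3 ≤ n) {t : Finset (Fin n ⊕ Fin n)}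
    (ht : (sunGraph n).IsClique t) : #t ≤ n := by
  let shift (i : Fin n) : Fin n := ⟨(i.val + 2) % n, Nat.mod_lt _ (by omega)⟩
  have hinj : Set.InjOn (Sum.elim shift id) t := by
    intro a ha b hb hab
    by_contra hne
    have hadj := ht ha hb hne
    rcases a with i | i <;> rcases b with j | j
    · exact sunGraph_adj_inl_inl _ _ hadj
    · have := Nat.add_two_mod_ne hn i.isLt
      simp_all [shift, Fin.ext_iff]
    · have := Nat.add_two_mod_ne hn j.isLt
      simp_all [shift, Fin.ext_iff, adj_comm]
    · exact hne (by simpa using hab)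
  simpa using card_le_card_of_injOn _ (fun _ _ ↦ mem_coe.2 (mem_univ _)) hinj

lemma coverNum_sunGraph : coverNum (sunGraph n) = n := by
  have hcover : (sunGraph n).IsVertexCover (univ.map .inr : Finset (Fin n ⊕ Fin n)) := by
    rintro (i | i) (j | j) h <;> simp_all
  rw [coverNum_eq_of_isVertexCover hcover fun t ht ↦ ?_]
  · simp
  · simpa [two_mul] using card_le_of_isIndepSet_sunGraph ht

lemma coverNum_compl_sunGraph (hn : 3 ≤ n) : coverNum (sunGraph n)ᶜ = n := by
  have hcover : (sunGraph n)ᶜ.IsVertexCover (univ.map .inl : Finset (Fin n ⊕ Fin n)) := by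
    rintro (i | i) (j | j) h <;> simp_all
  rw [coverNum_eq_of_isVertexCover hcover fun t ht ↦ ?_]
  · simp
  · rw [isIndepSet_compl] at ht
    simpa using card_le_of_isClique_sunGraph hn ht

end sunGraph

/-- For `n ≥ 3`, the complete sun graph satisfies `β(S_n) + β(S_nᶜ) = 2n` and
`β(S_n) * β(S_nᶜ) = n²`. -/
theorem coverNum_sunGraph_add_mul_complement (n : ℕ) (hn : 3 ≤ n) :
    coverNum (sunGraph n) + coverNum (sunGraph n)ᶜ = 2 * n ∧
    coverNum (sunGraph n) * coverNum (sunGraph n)ᶜ = n ^ 2 := by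
  rw [coverNum_sunGraph, coverNum_compl_sunGraph hn]
  constructor <;> ring
end

section
/- For all integers m ≥ 1 and n ≥ 4 with mn even, the independence number of the armed crown graph obtained from the cycle C_n and paths P_m equals mn/2. -/
/-- The armed crown graph: vertices `(i, j)` with `i : Fin n`, `j : Fin m`; the vertices
`(i, 0)` form a cycle `C_n`, and for each `i` the vertices `(i, 0), (i, 1), …, (i, m-1)`
form a path `P_m` adjoined to the cycle vertex `(i, 0)`. -/
def armedCrownGraph (m n : ℕ) : SimpleGraph (Fin n × Fin m) :=
  SimpleGraph.fromRel (fun a b =>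
    (a.2.val = 0 ∧ b.2.val = 0 ∧ (a.1.val + 1) % n = b.1.val) ∨
    (a.1 = b.1 ∧ a.2.val + 1 = b.2.val))

/-!
Both bounds come from a perfect matching, given as a fixed-point-free involution `p` with
`v ~ p v`: an independent set meets each matched pair at most once, so it has at most half of the
vertices, and an independent set containing one vertex of every pair has exactly half. If `m` is
even, match the arm vertices `2t ↔ 2t + 1` and take the odd levels. If `m` is odd, `n` is even:
match the cycle vertices `2t ↔ 2t + 1`, the remaining arm vertices `2t + 1 ↔ 2t + 2`, and take the
vertices `(i, j)` with `i + j` even, one colour class of the bipartite graph.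
-/

section Matching

variable {V : Type*} {G : SimpleGraph V}

theorem indepNum_eq_card_of_forall_card_le [Fintype V] {s : Finset V}
    (hs : ∀ u ∈ s, ∀ v ∈ s, ¬ G.Adj u v)
    (hmax : ∀ t : Finset V, (∀ u ∈ t, ∀ v ∈ t, ¬ G.Adj u v) → t.card ≤ s.card) :
    indepNum G = s.card :=
  IsGreatest.csSup_eq ⟨⟨s, rfl, hs⟩, by rintro _ ⟨t, rfl, ht⟩; exact hmax t ht⟩

variable [DecidableEq V] {p : V → V}

theorem disjoint_image_of_forall_adj (hadj : ∀ v, G.Adj v (p v)) {s : Finset V}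
    (hs : ∀ u ∈ s, ∀ v ∈ s, ¬ G.Adj u v) : Disjoint s (s.image p) := by
  rw [Finset.disjoint_right]
  rintro _ hv hvs
  obtain ⟨u, hu, rfl⟩ := Finset.mem_image.mp hv
  exact hs u hu (p u) hvs (hadj u)

variable [Fintype V]

theorem two_mul_card_le_of_involutive (hp : Function.Involutive p)
    (hadj : ∀ v, G.Adj v (p v)) {s : Finset V} (hs : ∀ u ∈ s, ∀ v ∈ s, ¬ G.Adj u v) :
    2 * s.card ≤ Fintype.card V :=
  calc 2 * s.card = (s ∪ s.image p).card := by
        rw [Finset.card_union_of_disjoint (disjoint_image_of_forall_adj hadj hs),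
          Finset.card_image_of_injective _ hp.injective, two_mul]
    _ ≤ Fintype.card V := Finset.card_le_univ _

theorem two_mul_card_eq_of_involutive (hp : Function.Involutive p)
    (hadj : ∀ v, G.Adj v (p v)) {s : Finset V} (hs : ∀ u ∈ s, ∀ v ∈ s, ¬ G.Adj u v)
    (hcover : ∀ v, v ∉ s → p v ∈ s) :
    2 * s.card = Fintype.card V := by
  have hunion : s ∪ s.image p = Finset.univ := by
    refine Finset.eq_univ_of_forall fun v => ?_
    by_cases hv : v ∈ s
    · exact Finset.mem_union_left _ hv
    · exact Finset.mem_union_right _ (Finset.mem_image.mpr ⟨p v, hcover v hv, hp v⟩)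
  rw [← Finset.card_univ, ← hunion,
    Finset.card_union_of_disjoint (disjoint_image_of_forall_adj hadj hs),
    Finset.card_image_of_injective _ hp.injective, two_mul]

theorem indepNum_eq_half_card_of_involutive (hp : Function.Involutive p)
    (hadj : ∀ v, G.Adj v (p v)) (s : Finset V) (hs : ∀ u ∈ s, ∀ v ∈ s, ¬ G.Adj u v)
    (hcover : ∀ v, v ∉ s → p v ∈ s) :
    indepNum G = Fintype.card V / 2 := by
  have hcard := two_mul_card_eq_of_involutive hp hadj hs hcover
  rw [indepNum_eq_card_of_forall_card_le hs fun t ht => by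
    have := two_mul_card_le_of_involutive hp hadj ht; omega]
  omega

end Matching

def sibling (j : ℕ) : ℕ := if j % 2 = 0 then j + 1 else j - 1

theorem sibling_involutive : Function.Involutive sibling := by
  intro j; unfold sibling; split_ifs <;> omega

theorem sibling_lt {j k : ℕ} (hj : j < k) (hk : Even k) : sibling j < k := by
  rw [Nat.even_iff] at hk; unfold sibling; split_ifs <;> omega

theorem sibling_mod_two (j : ℕ) : sibling j % 2 = 1 - j % 2 := by
  unfold sibling; split_ifs <;> omega

theorem add_one_eq_sibling_or_sibling_add_one_eq (j : ℕ) :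
    j + 1 = sibling j ∨ sibling j + 1 = j := by
  unfold sibling; split_ifs <;> omega

theorem Nat.add_one_mod_eq_ite {a n : ℕ} (ha : a < n) :
    (a + 1) % n = if a + 1 = n then 0 else a + 1 := by
  split_ifs with h
  · rw [h, Nat.mod_self]
  · exact Nat.mod_eq_of_lt (by omega)

namespace armedCrownGraph

variable {m n : ℕ}

theorem adj_iff {a b : Fin n × Fin m} :
    (armedCrownGraph m n).Adj a b ↔ a ≠ b ∧
      ((a.2.val = 0 ∧ b.2.val = 0 ∧ (a.1.val + 1) % n = b.1.val ∨
          a.1 = b.1 ∧ a.2.val + 1 = b.2.val) ∨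
        (b.2.val = 0 ∧ a.2.val = 0 ∧ (b.1.val + 1) % n = a.1.val ∨
          b.1 = a.1 ∧ b.2.val + 1 = a.2.val)) :=
  SimpleGraph.fromRel_adj _ a b

theorem adj_of_arm {i : Fin n} {j j' : Fin m} (h : j.val + 1 = j'.val ∨ j'.val + 1 = j.val) :
    (armedCrownGraph m n).Adj (i, j) (i, j') := by
  refine adj_iff.mpr ⟨fun hij => by rw [Prod.mk.injEq] at hij; omega, ?_⟩
  rcases h with h | h
  · exact Or.inl (Or.inr ⟨rfl, h⟩)
  · exact Or.inr (Or.inr ⟨rfl, h⟩)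

theorem adj_of_rim {i i' : Fin n} {j : Fin m} (hj : j.val = 0)
    (h : i.val + 1 = i'.val ∨ i'.val + 1 = i.val) :
    (armedCrownGraph m n).Adj (i, j) (i', j) := by
  refine adj_iff.mpr ⟨fun hij => by rw [Prod.mk.injEq] at hij; omega, ?_⟩
  rcases h with h | h
  · exact Or.inl (Or.inl ⟨hj, hj, by rw [h, Nat.mod_eq_of_lt i'.isLt]⟩)
  · exact Or.inr (Or.inl ⟨hj, hj, by rw [h, Nat.mod_eq_of_lt i.isLt]⟩)

theorem indepNum_of_even_left (hm : Even m) :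
    indepNum (armedCrownGraph m n) = m * n / 2 := by
  classical
  let p : Fin n × Fin m → Fin n × Fin m := fun v => (v.1, ⟨sibling v.2, sibling_lt v.2.isLt hm⟩)
  let s : Finset (Fin n × Fin m) := {v | v.2.val % 2 = 1}
  have hp : Function.Involutive p := fun v => by simp only [p, sibling_involutive _]
  have hadj : ∀ v, (armedCrownGraph m n).Adj v (p v) := fun v =>
    adj_of_arm (add_one_eq_sibling_or_sibling_add_one_eq v.2)
  have hs : ∀ u ∈ s, ∀ v ∈ s, ¬ (armedCrownGraph m n).Adj u v := by
    simp only [s, Finset.mem_filter, Finset.mem_univ, true_and]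
    intro u hu v hv huv
    rcases adj_iff.mp huv with ⟨-, h | h⟩ <;> omega
  have hcover : ∀ v, v ∉ s → p v ∈ s := by
    simp only [s, p, Finset.mem_filter, Finset.mem_univ, true_and]
    intro v hv
    have := sibling_mod_two v.2
    omega
  rw [indepNum_eq_half_card_of_involutive hp hadj s hs hcover, Fintype.card_prod,
    Fintype.card_fin, Fintype.card_fin, mul_comm]

theorem indepNum_of_even_right (hm : Odd m) (hn : Even n) :
    indepNum (armedCrownGraph m n) = m * n / 2 := by
  classical
  have hm' : Even (m - 1) := Nat.Odd.sub_odd hm odd_one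
  let p : Fin n × Fin m → Fin n × Fin m := fun v =>
    if hv : v.2.val = 0 then (⟨sibling v.1, sibling_lt v.1.isLt hn⟩, v.2)
    else (v.1, ⟨sibling (v.2 - 1) + 1, Nat.add_lt_of_lt_sub (sibling_lt (by omega) hm')⟩)
  let s : Finset (Fin n × Fin m) := {v | (v.1.val + v.2.val) % 2 = 0}
  have hp : Function.Involutive p := by
    rintro ⟨i, j⟩
    by_cases hj : j.val = 0
    · simp [p, hj, sibling_involutive _]
    · simp only [p, dif_neg hj, Nat.add_one_ne_zero, add_tsub_cancel_right,
        sibling_involutive _, dite_false]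
      exact Prod.ext rfl <| Fin.ext (Nat.sub_add_cancel (Nat.one_le_iff_ne_zero.mpr hj))
  have hadj : ∀ v, (armedCrownGraph m n).Adj v (p v) := by
    rintro ⟨i, j⟩
    by_cases hj : j.val = 0
    · simp only [p, dif_pos hj]
      exact adj_of_rim hj (add_one_eq_sibling_or_sibling_add_one_eq i)
    · simp only [p, dif_neg hj]
      refine adj_of_arm (?_ : j.val + 1 = sibling (j - 1) + 1 ∨ sibling (j - 1) + 1 + 1 = j.val)
      have := add_one_eq_sibling_or_sibling_add_one_eq (j.val - 1)
      omega
  -- the wrap-around edge of the cycle joins `n - 1` and `0`, of different parity as `n` is even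
  have hs : ∀ u ∈ s, ∀ v ∈ s, ¬ (armedCrownGraph m n).Adj u v := by
    simp only [s, Finset.mem_filter, Finset.mem_univ, true_and]
    intro u hu v hv huv
    rw [Nat.even_iff] at hn
    rcases adj_iff.mp huv with ⟨-, h | h⟩
    · rw [Nat.add_one_mod_eq_ite u.1.isLt] at h
      split_ifs at h <;> omega
    · rw [Nat.add_one_mod_eq_ite v.1.isLt] at h
      split_ifs at h <;> omega
  have hcover : ∀ v, v ∉ s → p v ∈ s := by
    rintro ⟨i, j⟩ hv
    simp only [s, Finset.mem_filter, Finset.mem_univ, true_and] at hv ⊢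
    by_cases hj : j.val = 0
    · simp only [p, dif_pos hj]
      have := sibling_mod_two i
      omega
    · simp only [p, dif_neg hj]
      have := sibling_mod_two (j - 1)
      omega
  rw [indepNum_eq_half_card_of_involutive hp hadj s hs hcover, Fintype.card_prod,
    Fintype.card_fin, Fintype.card_fin, mul_comm]

end armedCrownGraph

theorem indepNum_armedCrownGraph_general (m n : ℕ)
    (h : Even (m * n)) :
    indepNum (armedCrownGraph m n) = m * n / 2 := by
  rcases Nat.even_or_odd m with hm | hm
  · exact armedCrownGraph.indepNum_of_even_left hm
  · have hn : Even n := (Nat.even_mul.mp h).resolve_left (Nat.not_even_iff_odd.mpr hm)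
    exact armedCrownGraph.indepNum_of_even_right hm hn

/-- For `m ≥ 1` and `n ≥ 4` with `mn` even, the independence number of the armed crown
graph obtained from the cycle `C_n` and paths `P_m` equals `mn/2`. -/
theorem indepNum_armedCrownGraph (m n : ℕ) (hm : 1 ≤ m) (hn : 4 ≤ n)
    (h : Even (m * n)) :
    indepNum (armedCrownGraph m n) = m * n / 2 :=
  indepNum_armedCrownGraph_general m n h
end
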